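/- arXiv:2007.07216 — 6 statements merged into one kernel-verified Lean document; each statement's English description precedes it below -/
import Mathlib

section
/- For all natural numbers n and k with 1 ≤ k ≤ n, letting m = ⌊n/k⌋ (integer floor division), it holds that ((n − m)/n)^k + Σ_{t=m+1}^{n} (1/t)·((n − t)/n)^k ≤ 2.7/e, and in particular this quantity is strictly less than 1. -/
/-!
With `ρ = exp (-k/n)` we have `((n - t)/n)^k ≤ ρ^t`, and `(m + 1) k > n` gives
`ρ^(m+1) < 1/e`. Bounding `1/t` by `1/(m+1)` turns the sum into a geometric tail
`ρ^(m+1) / ((m+1)(1-ρ))`. For `m = 1, 2` (after splitting off the term `t = 2` when `m = 1`)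
the resulting one-variable bound is checked numerically from `ρ ≤ e^(-1/(m+1))`. For `m ≥ 3`,
`1 + k/n ≤ exp (k/n)` makes the tail at most `ρ^m`, so the whole quantity is at most
`2 ρ^m < 2 e^(-3/4) < 2.7/e`.
-/

open Finset Real

lemma sub_div_pow_le_exp_neg_pow {n : ℕ} (hn : 0 < n) (k : ℕ) {t : ℕ} (ht : t ≤ n) :
    (((n : ℝ) - t) / n) ^ k ≤ exp (-(k / n)) ^ t := by
  have hn' : (0 : ℝ) < n := by exact_mod_cast hn
  have hsub : ((n : ℝ) - t) / n = 1 - t / n := by field_simp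
  have hnonneg : 0 ≤ 1 - (t : ℝ) / n := by
    rw [sub_nonneg, div_le_one hn']; exact_mod_cast ht
  calc (((n : ℝ) - t) / n) ^ k ≤ exp (-(t / n)) ^ k := by
        rw [hsub]; exact pow_le_pow_left₀ hnonneg (one_sub_le_exp_neg _) k
    _ = exp (-(k / n)) ^ t := by
        rw [← exp_nat_mul, ← exp_nat_mul]; ring_nf

section

variable {ρ : ℝ}

lemma sum_Icc_pow_div_le (hρ0 : 0 ≤ ρ) (hρ1 : ρ < 1) {c : ℕ} (hc : 0 < c) (N : ℕ) :
    ∑ t ∈ Icc c N, ρ ^ t / t ≤ ρ ^ c / (c * (1 - ρ)) := by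
  have hc' : (0 : ℝ) < c := by exact_mod_cast hc
  calc ∑ t ∈ Icc c N, ρ ^ t / t ≤ ∑ t ∈ Ico c (N + 1), ρ ^ t / c := by
        rw [Ico_add_one_right_eq_Icc]
        refine sum_le_sum fun t ht => ?_
        gcongr
        exact_mod_cast (mem_Icc.mp ht).1
    _ ≤ ρ ^ c / (1 - ρ) / c := by
        rw [← sum_div]
        gcongr
        exact geom_sum_Ico_le_of_lt_one hρ0 hρ1
    _ = ρ ^ c / (c * (1 - ρ)) := by rw [div_div, mul_comm]

lemma sum_Icc_pow_div_le_add (hρ0 : 0 ≤ ρ) (hρ1 : ρ < 1) {c : ℕ} (hc : 0 < c) (N : ℕ) :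
    ∑ t ∈ Icc c N, ρ ^ t / t ≤ ρ ^ c / c + ρ ^ (c + 1) / ((c + 1) * (1 - ρ)) := by
  have htail := sum_Icc_pow_div_le hρ0 hρ1 (Nat.add_one_pos c) N
  push_cast at htail
  rcases le_or_gt c N with hcN | hNc
  · rw [Icc_eq_cons_Ioc hcN, sum_cons, ← Icc_add_one_left_eq_Ioc]
    gcongr
  · rw [Icc_eq_empty_of_lt hNc, sum_empty]
    have : 0 ≤ 1 - ρ := by linarith
    positivity

lemma pow_add_sum_Icc_pow_div_le_of_one (hρ0 : 0 ≤ ρ) (hρ1 : ρ < 1) (hρe : ρ ^ 2 < exp (-1))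
    (N : ℕ) : ρ ^ 1 + ∑ t ∈ Icc 2 N, ρ ^ t / t ≤ 2.7 * exp (-1) := by
  have hρ : ρ ≤ 0.6066 :=
    (lt_of_pow_lt_pow_left₀ 2 (by norm_num)
      (hρe.trans (exp_neg_one_lt_d9.trans (by norm_num)))).le
  have htail := sum_Icc_pow_div_le_add hρ0 hρ1 two_pos N
  calc ρ ^ 1 + ∑ t ∈ Icc 2 N, ρ ^ t / t
      ≤ ρ + (ρ ^ 2 / 2 + ρ ^ 3 / (3 * (1 - ρ))) := by norm_num at htail ⊢; linarith
    _ ≤ 0.6066 + (0.6066 ^ 2 / 2 + 0.6066 ^ 3 / (3 * (1 - 0.6066))) := by gcongr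
    _ ≤ 2.7 * exp (-1) := by linarith [exp_neg_one_gt_d9]

lemma pow_add_sum_Icc_pow_div_le_of_two (hρ0 : 0 ≤ ρ) (hρ1 : ρ < 1) (hρe : ρ ^ 3 < exp (-1))
    (N : ℕ) : ρ ^ 2 + ∑ t ∈ Icc 3 N, ρ ^ t / t ≤ 2.7 * exp (-1) := by
  have hρ : ρ ≤ 0.717 :=
    (lt_of_pow_lt_pow_left₀ 3 (by norm_num)
      (hρe.trans (exp_neg_one_lt_d9.trans (by norm_num)))).le
  have htail := sum_Icc_pow_div_le hρ0 hρ1 three_pos N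
  calc ρ ^ 2 + ∑ t ∈ Icc 3 N, ρ ^ t / t
      ≤ ρ ^ 2 + ρ ^ 3 / (3 * (1 - ρ)) := by push_cast at htail; linarith
    _ ≤ 0.717 ^ 2 + 0.717 ^ 3 / (3 * (1 - 0.717)) := by gcongr
    _ ≤ 2.7 * exp (-1) := by linarith [exp_neg_one_gt_d9]

lemma pow_add_sum_Icc_pow_div_le_of_three_le {m : ℕ} (hm : 3 ≤ m) (hρ0 : 0 ≤ ρ) (hρ1 : ρ < 1)
    (hρe : ρ ^ (m + 1) < exp (-1)) (hρ : ρ < (m + 1) * (1 - ρ)) (N : ℕ) :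
    ρ ^ m + ∑ t ∈ Icc (m + 1) N, ρ ^ t / t ≤ 2.7 * exp (-1) := by
  have htail : ∑ t ∈ Icc (m + 1) N, ρ ^ t / t ≤ ρ ^ m := by
    refine (sum_Icc_pow_div_le hρ0 hρ1 m.succ_pos N).trans ?_
    rw [div_le_iff₀ (by push_cast; nlinarith), pow_succ]
    push_cast
    exact mul_le_mul_of_nonneg_left hρ.le (pow_nonneg hρ0 m)
  -- `ρ ^ m < exp (-3/4)`, as `4 m ≥ 3 (m + 1)`
  have hρ4 : (ρ ^ m) ^ 4 ≤ exp (-1) ^ 3 := calc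
    (ρ ^ m) ^ 4 ≤ (ρ ^ (m + 1)) ^ 3 := by
      rw [← pow_mul, ← pow_mul]; exact pow_le_pow_of_le_one hρ0 hρ1.le (by omega)
    _ ≤ exp (-1) ^ 3 := by gcongr
  have hfinal : (2 * ρ ^ m) ^ 4 ≤ (2.7 * exp (-1)) ^ 4 := by
    rw [mul_pow, mul_pow]
    nlinarith [exp_neg_one_gt_d9, pow_pos (exp_pos (-1)) 3]
  have := (pow_le_pow_iff_left₀ (by positivity) (by positivity) four_ne_zero).mp hfinal
  linarith

end

lemma exp_neg_pow_add_sum_Icc_pow_div_le {b : ℝ} {m : ℕ} (hm : 1 ≤ m) (hb : 1 < (m + 1) * b)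
    (N : ℕ) : exp (-b) ^ m + ∑ t ∈ Icc (m + 1) N, exp (-b) ^ t / t ≤ 2.7 * exp (-1) := by
  have hb0 : 0 < b := pos_of_mul_pos_right (one_pos.trans hb) (by positivity)
  have hρ0 : 0 ≤ exp (-b) := (exp_pos _).le
  have hρ1 : exp (-b) < 1 := exp_lt_one_iff.mpr (neg_lt_zero.mpr hb0)
  have hρe : exp (-b) ^ (m + 1) < exp (-1) := by
    rw [← exp_nat_mul, exp_lt_exp]; push_cast; linarith
  -- `1 + b ≤ exp b` gives `b * exp (-b) ≤ 1 - exp (-b)`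
  have hρ : exp (-b) < (m + 1) * (1 - exp (-b)) := by
    have h := add_one_le_exp b
    have hinv : exp b * exp (-b) = 1 := by rw [← exp_add, add_neg_cancel, exp_zero]
    nlinarith
  obtain rfl | rfl | h3 : m = 1 ∨ m = 2 ∨ 3 ≤ m := by omega
  · exact pow_add_sum_Icc_pow_div_le_of_one hρ0 hρ1 hρe N
  · exact pow_add_sum_Icc_pow_div_le_of_two hρ0 hρ1 hρe N
  · exact pow_add_sum_Icc_pow_div_le_of_three_le h3 hρ0 hρ1 hρe hρ N

theorem stmt_4 (n k : ℕ) (hk : 1 ≤ k) (hkn : k ≤ n) :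
    (((n : ℝ) - (n / k : ℕ)) / n) ^ k
        + ∑ t ∈ Finset.Icc (n / k + 1) n, (1 / (t : ℝ)) * (((n : ℝ) - t) / n) ^ k
      ≤ 2.7 / Real.exp 1 ∧
    (((n : ℝ) - (n / k : ℕ)) / n) ^ k
        + ∑ t ∈ Finset.Icc (n / k + 1) n, (1 / (t : ℝ)) * (((n : ℝ) - t) / n) ^ k
      < 1 := by
  have hn : 0 < n := hk.trans hkn
  have hm : 1 ≤ n / k := (Nat.one_le_div_iff hk).mpr hkn
  have hb : 1 < ((n / k : ℕ) + 1 : ℝ) * (k / n) := by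
    rw [← mul_div_assoc, one_lt_div (by exact_mod_cast hn)]
    exact_mod_cast Nat.lt_div_mul_add hk |>.trans_eq (by ring)
  have hexp : (((n : ℝ) - (n / k : ℕ)) / n) ^ k
        + ∑ t ∈ Icc (n / k + 1) n, (1 / (t : ℝ)) * (((n : ℝ) - t) / n) ^ k
      ≤ exp (-(k / n)) ^ (n / k) + ∑ t ∈ Icc (n / k + 1) n, exp (-(k / n)) ^ t / t := by
    gcongr with t ht
    · exact sub_div_pow_le_exp_neg_pow hn k (Nat.div_le_self n k)
    · rw [one_div_mul_eq_div]
      gcongr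
      exact sub_div_pow_le_exp_neg_pow hn k (mem_Icc.mp ht).2
  have hle := hexp.trans (exp_neg_pow_add_sum_Icc_pow_div_le hm hb n)
  rw [exp_neg, ← div_eq_mul_inv] at hle
  exact ⟨hle, hle.trans_lt ((div_lt_one (exp_pos 1)).mpr (by linarith [exp_one_gt_d9]))⟩
end

section
/- For all natural numbers n and k with 1 ≤ k ≤ n, letting m = ⌊n/k⌋ (integer floor division), it holds that ∏_{i=0}^{k−1} ((n − m − i)/(n − i)) + Σ_{t=m+1}^{n} (1/t)·∏_{i=0}^{k−1} ((n − t − i)/(n − i)) < 1. -/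
/-!
Write `F x = x (x - 1) ⋯ (x - k + 1)` for the falling factorial `(descPochhammer ℝ k).eval x`, so
that each product in the statement is `F (n - t) / F n`, and put `m = n / k`. Bounding `1 / t` by
`1 / (m + 1)` and summing with the hockey-stick identity `(k + 1) ∑_{j < N} F j = (N - k) F N`
reduces the claim to
`F (n - m) (1 + (n - m - k) / ((m + 1) (k + 1))) < F n`, where the bracket is `< 2` since
`n < k (m + 1)`. Finally `F (n - m) ≤ ((n - k) / n) ^ m F n ≤ F n / 2`: the first step telescopes
`x F (x - 1) = (x - k) F x`, the second is Bernoulli's inequality `n ^ m ≥ 2 (n - k) ^ m`, valid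
because `n - k ≤ k m`.
-/

open Finset Polynomial

section CommRing

variable {R : Type*} [CommRing R] (k : ℕ)

theorem mul_descPochhammer_eval_sub_one (x : R) :
    x * (descPochhammer R k).eval (x - 1) = (descPochhammer R k).eval x * (x - k) := by
  rw [← descPochhammer_succ_eval, descPochhammer_succ_left, eval_mul, eval_X, eval_comp,
    eval_sub, eval_X, eval_one]

theorem descPochhammer_succ_eval_add_one (x : R) :
    (descPochhammer R (k + 1)).eval (x + 1)
      = (descPochhammer R (k + 1)).eval x + (k + 1) * (descPochhammer R k).eval x := by
  have h := mul_descPochhammer_eval_sub_one k (x + 1)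
  rw [add_sub_cancel_right] at h
  rw [descPochhammer_succ_eval, descPochhammer_succ_eval, ← h]
  ring

theorem sum_range_descPochhammer_eval (N : ℕ) :
    (k + 1) * ∑ j ∈ range N, (descPochhammer R k).eval (j : R)
      = (descPochhammer R (k + 1)).eval (N : R) := by
  induction N with
  | zero => simp
  | succ N ih => rw [sum_range_succ, mul_add, ih, Nat.cast_succ,
      descPochhammer_succ_eval_add_one]

end CommRing

theorem prod_range_div_eq_descPochhammer_eval_div {K : Type*} [Field K] (k : ℕ) (x y : K) :
    ∏ i ∈ range k, ((x - i) / (y - i))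
      = (descPochhammer K k).eval x / (descPochhammer K k).eval y := by
  rw [prod_div_distrib, descPochhammer_eval_eq_prod_range, descPochhammer_eval_eq_prod_range]

theorem two_mul_pow_le_add_pow {a b : ℝ} {m : ℕ} (ha : 0 ≤ a) (hb : 0 ≤ b) (hm : m ≠ 0)
    (hab : a ≤ m * b) : 2 * a ^ m ≤ (a + b) ^ m := by
  have hbern := pow_add_mul_le_add_pow ha (by positivity : 0 ≤ 2 * a + b) m
  have : a ^ m ≤ m * a ^ (m - 1) * b := by
    calc a ^ m = a ^ (m - 1) * a := (pow_sub_one_mul hm a).symm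
      _ ≤ a ^ (m - 1) * (m * b) := by gcongr
      _ = m * a ^ (m - 1) * b := by ring
  linarith

theorem descPochhammer_eval_natCast_sub_nonneg (k : ℕ) {n j : ℕ} (hj : j ≤ n) :
    0 ≤ (descPochhammer ℝ k).eval ((n : ℝ) - j) := by
  rw [← Nat.cast_sub hj, descPochhammer_eval_eq_descFactorial]
  positivity

theorem descPochhammer_eval_natCast_pos {k n : ℕ} (hkn : k ≤ n) :
    0 < (descPochhammer ℝ k).eval (n : ℝ) := by
  rw [descPochhammer_eval_eq_descFactorial]
  exact_mod_cast Nat.descFactorial_pos.2 hkn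

theorem mul_descPochhammer_eval_sub_one_le (k : ℕ) {x y : ℝ} (hx : 0 < x) (hxy : x ≤ y)
    (hF : 0 ≤ (descPochhammer ℝ k).eval x) :
    y * (descPochhammer ℝ k).eval (x - 1) ≤ (y - k) * (descPochhammer ℝ k).eval x := by
  have h := mul_descPochhammer_eval_sub_one k x
  refine le_of_mul_le_mul_left ?_ hx
  have hk : (0 : ℝ) ≤ k := k.cast_nonneg
  nlinarith [mul_nonneg (mul_nonneg hk (sub_nonneg.2 hxy)) hF]

theorem pow_mul_descPochhammer_eval_sub_le {k n : ℕ} (hkn : k ≤ n) {j : ℕ} (hj : j ≤ n) :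
    (n : ℝ) ^ j * (descPochhammer ℝ k).eval ((n : ℝ) - j)
      ≤ ((n : ℝ) - k) ^ j * (descPochhammer ℝ k).eval (n : ℝ) := by
  induction j with
  | zero => simp
  | succ j ih =>
    have hstep := mul_descPochhammer_eval_sub_one_le k (x := (n : ℝ) - j) (y := n)
      (by rw [sub_pos]; exact_mod_cast hj) (sub_le_self _ j.cast_nonneg)
      (descPochhammer_eval_natCast_sub_nonneg k (by omega))
    have hnk : (0 : ℝ) ≤ n - k := sub_nonneg.2 (by exact_mod_cast hkn)
    calc (n : ℝ) ^ (j + 1) * (descPochhammer ℝ k).eval ((n : ℝ) - (j + 1 : ℕ))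
        = (n : ℝ) ^ j * ((n : ℝ) * (descPochhammer ℝ k).eval ((n : ℝ) - j - 1)) := by
          push_cast; ring_nf
      _ ≤ (n : ℝ) ^ j * (((n : ℝ) - k) * (descPochhammer ℝ k).eval ((n : ℝ) - j)) :=
          mul_le_mul_of_nonneg_left hstep (by positivity)
      _ = ((n : ℝ) - k) * ((n : ℝ) ^ j * (descPochhammer ℝ k).eval ((n : ℝ) - j)) := by ring
      _ ≤ ((n : ℝ) - k) * (((n : ℝ) - k) ^ j * (descPochhammer ℝ k).eval (n : ℝ)) :=
          mul_le_mul_of_nonneg_left (ih (by omega)) hnk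
      _ = ((n : ℝ) - k) ^ (j + 1) * (descPochhammer ℝ k).eval (n : ℝ) := by ring

theorem two_mul_descPochhammer_eval_sub_le {k m n : ℕ} (hkn : k ≤ n) (hmn : m ≤ n) (hm0 : m ≠ 0)
    (hm : n ≤ k * (m + 1)) :
    2 * (descPochhammer ℝ k).eval ((n : ℝ) - m) ≤ (descPochhammer ℝ k).eval (n : ℝ) := by
  have htel := pow_mul_descPochhammer_eval_sub_le hkn hmn
  have hbern : 2 * ((n : ℝ) - k) ^ m ≤ (n : ℝ) ^ m := by
    have hcast : (n : ℝ) ≤ k * (m + 1) := by exact_mod_cast hm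
    simpa using two_mul_pow_le_add_pow (a := (n : ℝ) - k) (b := k)
      (sub_nonneg.2 (by exact_mod_cast hkn)) k.cast_nonneg hm0 (by linarith)
  have hD := descPochhammer_eval_natCast_pos hkn
  have hpos : (0 : ℝ) < (n : ℝ) ^ m := pow_pos (by exact_mod_cast (by omega : 0 < n)) m
  refine le_of_mul_le_mul_left ?_ hpos
  nlinarith

theorem sum_Icc_natCast_sub_eq_sum_range {M : Type*} [AddCommMonoid M] (f : ℝ → M) {m n : ℕ}
    (hmn : m ≤ n) : ∑ t ∈ Icc (m + 1) n, f ((n : ℝ) - t) = ∑ j ∈ range (n - m), f j := by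
  refine sum_nbij' (fun t ↦ n - t) (fun j ↦ n - j) ?_ ?_ ?_ ?_ fun t ht ↦ ?_
  iterate 4 (intro x hx; simp only [mem_Icc, mem_range] at hx ⊢; omega)
  rw [Nat.cast_sub (mem_Icc.1 ht).2]

theorem sum_Icc_one_div_mul_descPochhammer_eval_le (k : ℕ) {m n : ℕ} (hmn : m ≤ n) :
    ∑ t ∈ Icc (m + 1) n, 1 / (t : ℝ) * (descPochhammer ℝ k).eval ((n : ℝ) - t)
      ≤ (descPochhammer ℝ k).eval ((n : ℝ) - m) * ((n : ℝ) - m - k) / ((m + 1) * (k + 1)) := by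
  calc ∑ t ∈ Icc (m + 1) n, 1 / (t : ℝ) * (descPochhammer ℝ k).eval ((n : ℝ) - t)
      ≤ ∑ t ∈ Icc (m + 1) n, 1 / ((m : ℝ) + 1) * (descPochhammer ℝ k).eval ((n : ℝ) - t) := by
        refine sum_le_sum fun t ht ↦ ?_
        have hmt : (m : ℝ) + 1 ≤ t := by exact_mod_cast (mem_Icc.1 ht).1
        gcongr
        exact descPochhammer_eval_natCast_sub_nonneg k (mem_Icc.1 ht).2
    _ = 1 / ((m : ℝ) + 1) * ∑ j ∈ range (n - m), (descPochhammer ℝ k).eval (j : ℝ) := by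
        rw [← mul_sum, sum_Icc_natCast_sub_eq_sum_range (descPochhammer ℝ k).eval hmn]
    _ = (descPochhammer ℝ (k + 1)).eval ((n - m : ℕ) : ℝ) / ((m + 1) * (k + 1)) := by
        rw [← sum_range_descPochhammer_eval]
        field_simp
    _ = (descPochhammer ℝ k).eval ((n : ℝ) - m) * ((n : ℝ) - m - k) / ((m + 1) * (k + 1)) := by
        rw [descPochhammer_succ_eval, Nat.cast_sub hmn]

theorem descPochhammer_eval_sub_add_sum_one_div_mul_lt {k m n : ℕ} (hkn : k ≤ n) (hmn : m ≤ n)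
    (hm0 : m ≠ 0) (hm : n ≤ k * (m + 1)) :
    (descPochhammer ℝ k).eval ((n : ℝ) - m)
        + ∑ t ∈ Icc (m + 1) n, 1 / (t : ℝ) * (descPochhammer ℝ k).eval ((n : ℝ) - t)
      < (descPochhammer ℝ k).eval (n : ℝ) := by
  set A := (descPochhammer ℝ k).eval ((n : ℝ) - m)
  set D := (descPochhammer ℝ k).eval (n : ℝ)
  set q : ℝ := (m + 1) * (k + 1)
  have hA : 0 ≤ A := descPochhammer_eval_natCast_sub_nonneg k hmn
  have hD : 0 < D := descPochhammer_eval_natCast_pos hkn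
  have hAD := two_mul_descPochhammer_eval_sub_le hkn hmn hm0 hm
  have hq : 0 < q := by positivity
  have hcast : (n : ℝ) ≤ k * (m + 1) := by exact_mod_cast hm
  have hn : (m : ℝ) ≤ n := by exact_mod_cast hmn
  have hlo : 0 < q + (n - m - k) := by simp only [q]; nlinarith
  have hhi : q + (n - m - k) < 2 * q := by simp only [q]; nlinarith
  calc A + ∑ t ∈ Icc (m + 1) n, 1 / (t : ℝ) * (descPochhammer ℝ k).eval ((n : ℝ) - t)
      ≤ A + A * ((n : ℝ) - m - k) / q := by
        gcongr; exact sum_Icc_one_div_mul_descPochhammer_eval_le k hmn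
    _ = A * (q + (n - m - k)) / q := by field_simp
    _ < D := by
        rw [div_lt_iff₀ hq]
        nlinarith [mul_le_mul_of_nonneg_right hAD hlo.le]

theorem stmt_5 (n k : ℕ) (hk : 1 ≤ k) (hkn : k ≤ n) :
    (∏ i ∈ Finset.range k, (((n : ℝ) - (n / k : ℕ) - i) / ((n : ℝ) - i)))
        + ∑ t ∈ Finset.Icc (n / k + 1) n,
            (1 / (t : ℝ)) * ∏ i ∈ Finset.range k, (((n : ℝ) - t - i) / ((n : ℝ) - i))
      < 1 := by
  have hm0 : n / k ≠ 0 := (Nat.div_pos hkn hk).ne'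
  have hm : n ≤ k * (n / k + 1) := (Nat.lt_mul_div_succ n hk).le
  simp only [prod_range_div_eq_descPochhammer_eval_div, ← mul_div_assoc, ← sum_div, ← add_div]
  rw [div_lt_one (descPochhammer_eval_natCast_pos hkn)]
  exact descPochhammer_eval_sub_add_sum_one_div_mul_lt hkn (Nat.div_le_self n k) hm0 hm
end

section
/- For all natural numbers n and k with 1 ≤ k ≤ n, letting m = ⌊n/k⌋ (integer floor division), it holds that (k/n)·Σ_{t=m+1}^{n} exp(−t·k/n) ≤ 1.7/e. -/
/-!
With `x = k / n ∈ (0, 1]` the summands form a geometric progression of ratio `e^{-x}`, so the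
sum is at most `e^{-(m+1)x} / (1 - e^{-x})`. Since `n < (m + 1) k`, the numerator is at most
`e^{-1}`; and by convexity of `exp` on `[-1, 0]`, `1 - e^{-x} ≥ (1 - e^{-1}) x`, so
`x / (1 - e^{-x}) ≤ 1 / (1 - e^{-1}) < 1.7`.
-/

open Real Finset

lemma sum_Icc_exp_neg_mul_le {x : ℝ} (hx : 0 < x) (a b : ℕ) :
    ∑ t ∈ Icc a b, exp (-(t * x)) ≤ exp (-(a * x)) / (1 - exp (-x)) := by
  have hpow (t : ℕ) : exp (-(t * x)) = exp (-x) ^ t := by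
    rw [← exp_nat_mul, mul_neg]
  simp only [hpow, ← Ico_add_one_right_eq_Icc]
  exact geom_sum_Ico_le_of_lt_one (exp_pos _).le (exp_lt_one_iff.2 (neg_lt_zero.2 hx))

lemma exp_neg_le_one_sub_mul {x : ℝ} (hx0 : 0 ≤ x) (hx1 : x ≤ 1) :
    exp (-x) ≤ 1 - (1 - exp (-1)) * x := by
  have := convexOn_exp.2 (Set.mem_univ 0) (Set.mem_univ (-1)) (sub_nonneg.2 hx1) hx0 (by ring)
  simp only [smul_eq_mul, mul_zero, zero_add, exp_zero, mul_one, mul_neg_one] at this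
  linarith

lemma div_one_sub_exp_neg_le {x : ℝ} (hx0 : 0 < x) (hx1 : x ≤ 1) :
    x / (1 - exp (-x)) ≤ 1.7 := by
  have hchord := exp_neg_le_one_sub_mul hx0.le hx1
  have he := exp_neg_one_lt_d9
  rw [div_le_iff₀ (by nlinarith)]
  nlinarith

lemma one_le_succ_div_mul_div {n k : ℕ} (hn : 0 < n) (hk : 0 < k) :
    1 ≤ ((n / k + 1 : ℕ) : ℝ) * (k / n) := by
  rw [mul_div_assoc', one_le_div (by positivity)]
  exact_mod_cast (Nat.lt_div_mul_add hk).le.trans_eq (by ring)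

theorem stmt_6 (n k : ℕ) (hk : 1 ≤ k) (hkn : k ≤ n) :
    ((k : ℝ) / n) * ∑ t ∈ Finset.Icc (n / k + 1) n, Real.exp (-((t : ℝ) * k / n))
      ≤ 1.7 / Real.exp 1 := by
  set x : ℝ := k / n
  have hx0 : 0 < x := div_pos (by exact_mod_cast hk) (by exact_mod_cast hk.trans hkn)
  have hx1 : x ≤ 1 := div_le_one_of_le₀ (by exact_mod_cast hkn) (Nat.cast_nonneg n)
  have hfirst : exp (-((n / k + 1 : ℕ) * x)) ≤ exp (-1) :=
    exp_le_exp.2 (neg_le_neg (one_le_succ_div_mul_div (hk.trans hkn) hk))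
  simp only [mul_div_assoc]
  calc x * ∑ t ∈ Icc (n / k + 1) n, exp (-(t * x))
      ≤ x * (exp (-((n / k + 1 : ℕ) * x)) / (1 - exp (-x))) :=
        mul_le_mul_of_nonneg_left (sum_Icc_exp_neg_mul_le hx0 _ _) hx0.le
    _ = exp (-((n / k + 1 : ℕ) * x)) * (x / (1 - exp (-x))) := by ring
    _ ≤ exp (-1) * 1.7 := by
        have hden : 0 ≤ 1 - exp (-x) := sub_nonneg.2 (exp_le_one_iff.2 (by linarith))
        exact mul_le_mul hfirst (div_one_sub_exp_neg_le hx0 hx1) (div_nonneg hx0.le hden)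
          (exp_pos _).le
    _ = 1.7 / exp 1 := by rw [exp_neg, inv_mul_eq_div]
end

section
/- Fix a natural number n ≥ 2 and a real number ℓ > 0. Suppose c : ℕ → ℝ satisfies c(n) = 1/ℓ and, for every integer t with 1 ≤ t < n, c(t) = (1/(t+1))·((n − t − 1)(n + t))/(n(n − 1)ℓ) + (t/(t+1))·c(t+1). Then for every integer t with 1 ≤ t ≤ n, c(t) = (n² + t² − t·n − n)/(n(n − 1)ℓ). -/
theorem stmt_16 (n : ℕ) (hn : 2 ≤ n) (ℓ : ℝ) (hℓ : 0 < ℓ) (c : ℕ → ℝ)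
    (hcn : c n = 1 / ℓ)
    (hrec : ∀ t : ℕ, 1 ≤ t → t < n →
      c t = (1 / ((t : ℝ) + 1)) * (((n : ℝ) - t - 1) * ((n : ℝ) + t))
              / ((n : ℝ) * ((n : ℝ) - 1) * ℓ)
          + ((t : ℝ) / ((t : ℝ) + 1)) * c (t + 1)) :
    ∀ t : ℕ, 1 ≤ t → t ≤ n →
      c t = ((n : ℝ) ^ 2 + (t : ℝ) ^ 2 - (t : ℝ) * n - n)
              / ((n : ℝ) * ((n : ℝ) - 1) * ℓ) := by
  have hn1 : (1:ℝ) ≤ (n:ℝ) - 1 := by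
    have : (2:ℝ) ≤ (n:ℝ) := by exact_mod_cast hn
    linarith
  have hnne : (n:ℝ) ≠ 0 := by positivity
  have hn1ne : (n:ℝ) - 1 ≠ 0 := by linarith
  have hlne : ℓ ≠ 0 := ne_of_gt hℓ
  have key : ∀ k t : ℕ, t + k = n → 1 ≤ t →
      c t = ((n : ℝ) ^ 2 + (t : ℝ) ^ 2 - (t : ℝ) * n - n)
              / ((n : ℝ) * ((n : ℝ) - 1) * ℓ) := by
    intro k
    induction k with
    | zero =>
      intro t h ht
      have ht' : t = n := by omega
      subst ht'
      rw [hcn]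
      field_simp
      ring
    | succ k ih =>
      intro t h ht
      have htn : t < n := by omega
      have ht1 : (1:ℝ) ≤ (t:ℝ) := by exact_mod_cast ht
      rw [hrec t ht htn, ih (t+1) (by omega) (by omega)]
      push_cast
      field_simp
      ring
  intro t ht htn
  exact key (n - t) t (by omega) ht
end

section
/- Fix a natural number n ≥ 2 and a real number ℓ > 0. Suppose d : ℕ → ℝ satisfies d(n) = 0 and, for every integer t with 1 ≤ t < n, d(t) = (1/(t+1))·((n − t − 1)(n + t))/(n(n − 1)ℓ) + (1/(t+1))·((n² + (t+1)² − (t+1)n − n)/(n(n − 1)ℓ)) + ((t − 1)/(t+1))·d(t+1). Then for every integer t with 1 ≤ t ≤ n, d(t) = (n − t)/(n·ℓ). -/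
theorem stmt_17 (n : ℕ) (hn : 2 ≤ n) (ℓ : ℝ) (hℓ : 0 < ℓ) (d : ℕ → ℝ)
    (hdn : d n = 0)
    (hrec : ∀ t : ℕ, 1 ≤ t → t < n →
      d t = (1 / ((t : ℝ) + 1)) * (((n : ℝ) - t - 1) * ((n : ℝ) + t))
              / ((n : ℝ) * ((n : ℝ) - 1) * ℓ)
          + (1 / ((t : ℝ) + 1)) *
              (((n : ℝ) ^ 2 + ((t : ℝ) + 1) ^ 2 - ((t : ℝ) + 1) * n - n)
                / ((n : ℝ) * ((n : ℝ) - 1) * ℓ))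
          + (((t : ℝ) - 1) / ((t : ℝ) + 1)) * d (t + 1)) :
    ∀ t : ℕ, 1 ≤ t → t ≤ n → d t = ((n : ℝ) - t) / ((n : ℝ) * ℓ) := by
  intro t ht htn
  obtain ⟨k, hk⟩ := Nat.exists_eq_add_of_le htn
  induction k generalizing t with
  | zero =>
    have : t = n := by omega
    subst this
    simp [hdn]
  | succ k ih =>
    have htn' : t < n := by omega
    have h1 : d (t + 1) = ((n : ℝ) - (t + 1)) / (n * ℓ) := by
      have := ih (t + 1) (by omega) (by omega) (by omega)
      push_cast at this ⊢
      linarith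
    rw [hrec t ht htn', h1]
    have hn2 : (2 : ℝ) ≤ (n : ℝ) := by exact_mod_cast hn
    have hne : (n : ℝ) ≠ 0 := by linarith
    have hne1 : (n : ℝ) - 1 ≠ 0 := by linarith
    have hℓ' : ℓ ≠ 0 := ne_of_gt hℓ
    have htne : (t : ℝ) + 1 ≠ 0 := by positivity
    field_simp
    ring
end

section
/- Fix a natural number n ≥ 2 and a real number ℓ > 0. Suppose b : ℕ → ℝ satisfies b(n) = 0 and, for every integer t with 1 ≤ t < n, b(t) = ((t − 1)/(t+1))·b(t+1) + (2/(t+1))·(1/ℓ). Then for every integer t with 1 ≤ t ≤ n, b(t) = (n − t)(n + t − 1)/(n(n − 1)ℓ). -/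
theorem stmt_18 (n : ℕ) (hn : 2 ≤ n) (ℓ : ℝ) (hℓ : 0 < ℓ) (b : ℕ → ℝ)
    (hbn : b n = 0)
    (hrec : ∀ t : ℕ, 1 ≤ t → t < n →
      b t = (((t : ℝ) - 1) / ((t : ℝ) + 1)) * b (t + 1)
          + (2 / ((t : ℝ) + 1)) * (1 / ℓ)) :
    ∀ t : ℕ, 1 ≤ t → t ≤ n →
      b t = ((n : ℝ) - t) * ((n : ℝ) + t - 1) / ((n : ℝ) * ((n : ℝ) - 1) * ℓ) := by
  have hn1 : (1:ℝ) < (n:ℝ) := by exact_mod_cast Nat.lt_of_lt_of_le one_lt_two hn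
  have hnne : (n:ℝ) ≠ 0 := by positivity
  have hn1ne : (n:ℝ) - 1 ≠ 0 := sub_ne_zero.mpr (ne_of_gt hn1)
  have hℓne : ℓ ≠ 0 := ne_of_gt hℓ
  have key : ∀ d t : ℕ, t + d = n → 1 ≤ t →
      b t = ((n : ℝ) - t) * ((n : ℝ) + t - 1) / ((n : ℝ) * ((n : ℝ) - 1) * ℓ) := by
    intro d
    induction d with
    | zero =>
      intro t ht _
      simp at ht
      subst ht
      rw [hbn]
      simp
    | succ d ih =>
      intro t ht h1
      have htn : t < n := by omega
      have ih' := ih (t+1) (by omega) (by omega)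
      rw [hrec t h1 htn, ih']
      have ht1 : ((t:ℝ) + 1) ≠ 0 := by positivity
      push_cast
      field_simp
      ring
  intro t h1 h2
  exact key (n - t) t (by omega) h1
end
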